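/- Let γ(s,t) be an arclength-parametrized inextensible flow of partially null curves in E⁴₁ with partially null Frenet frame {T, N, B₁, B₂}, curvatures k₁, k₂ (k₃ = 0), and flow ∂γ/∂t = β₁T + β₂N + β₃B₁ + β₄B₂ (so ∂β₁/∂s = β₂k₁). Then the first curvature satisfies the evolution equation ∂k₁/∂t = ∂²β₂/∂s² + ∂(β₁k₁)/∂s − ∂(β₄k₂)/∂s − (∂β₄/∂s)k₂. -/

import Mathlib

/-!
Write `k₁ = ⟨∂T/∂s, N⟩`. Differentiating in `t`, the term `⟨∂T/∂s, ∂N/∂t⟩ = k₁⟨N, ∂N/∂t⟩` vanishes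
because `⟨N, N⟩ = 1`, and the mixed partials commute, so `∂k₁/∂t = ⟨∂/∂s (∂T/∂t), N⟩`. Again by
symmetry of mixed partials `∂T/∂t = ∂/∂s (∂γ/∂t)`, which the Frenet equations and inextensibility
expand as `a N + b B₁ + c B₂` with `a = β₁k₁ + ∂β₂/∂s − β₄k₂` and `c = ∂β₄/∂s`. Differentiating once
more and pairing with `N` leaves `∂a/∂s − c k₂`.
-/

noncomputable section

/-- The Minkowski bilinear form on `ℝ⁴` with signature `(-,+,+,+)`. -/
def mink (v w : Fin 4 → ℝ) : ℝ :=
  -(v 0 * w 0) + v 1 * w 1 + v 2 * w 2 + v 3 * w 3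

/-- The Minkowski norm `‖v‖ = √|⟨v,v⟩|`. -/
def mnorm (v : Fin 4 → ℝ) : ℝ := Real.sqrt |mink v v|

open Function

section Minkowski

theorem mink_comm (v w : Fin 4 → ℝ) : mink v w = mink w v := by
  simp only [mink]; ring

theorem mink_add_left (u v w : Fin 4 → ℝ) : mink (u + v) w = mink u w + mink v w := by
  simp only [mink, Pi.add_apply]; ring

theorem mink_smul_left (a : ℝ) (v w : Fin 4 → ℝ) : mink (a • v) w = a * mink v w := by
  simp only [mink, Pi.smul_apply, smul_eq_mul]; ring

theorem mink_zero_left (w : Fin 4 → ℝ) : mink 0 w = 0 := by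
  simp [mink]

variable {g h : ℝ → Fin 4 → ℝ} {g' h' : Fin 4 → ℝ} {x : ℝ}

theorem HasDerivAt.mink (hg : HasDerivAt g g' x) (hh : HasDerivAt h h' x) :
    HasDerivAt (fun y => mink (g y) (h y)) (mink g' (h x) + mink (g x) h') x := by
  have hg' (i : Fin 4) : HasDerivAt (g · i) (g' i) x := hasDerivAt_pi.1 hg i
  have hh' (i : Fin 4) : HasDerivAt (h · i) (h' i) x := hasDerivAt_pi.1 hh i
  exact ((((hg' 0).fun_mul (hh' 0)).fun_neg.fun_add ((hg' 1).fun_mul (hh' 1))).fun_add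
    ((hg' 2).fun_mul (hh' 2))).fun_add ((hg' 3).fun_mul (hh' 3)) |>.congr_deriv
      (by simp only [_root_.mink]; ring)

theorem mink_eq_zero_of_mink_self_eq_const {c : ℝ} (hg : HasDerivAt g g' x)
    (hc : ∀ y, mink (g y) (g y) = c) : mink (g x) g' = 0 := by
  have hconst : HasDerivAt (fun y => mink (g y) (g y)) 0 x := by
    simpa only [hc] using hasDerivAt_const x c
  have hsum := (hg.mink hg).unique hconst
  rw [mink_comm g'] at hsum
  linarith

end Minkowski

section PartialDeriv

variable {F : Type*} [NormedAddCommGroup F] [NormedSpace ℝ F] {f : ℝ → ℝ → F} {s t : ℝ}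

theorem HasFDerivAt.hasDerivAt_uncurry_left {L : ℝ × ℝ →L[ℝ] F}
    (hf : HasFDerivAt (uncurry f) L (s, t)) : HasDerivAt (f · t) (L (1, 0)) s :=
  hf.comp_hasDerivAt_of_eq s ((hasDerivAt_id s).prodMk (hasDerivAt_const s t)) rfl

theorem HasFDerivAt.hasDerivAt_uncurry_right {L : ℝ × ℝ →L[ℝ] F}
    (hf : HasFDerivAt (uncurry f) L (s, t)) : HasDerivAt (f s ·) (L (0, 1)) t :=
  hf.comp_hasDerivAt_of_eq t ((hasDerivAt_const t s).prodMk (hasDerivAt_id t)) rfl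

variable {n : WithTop ℕ∞}

theorem ContDiff.differentiable_left (hf : ContDiff ℝ n (uncurry f)) (hn : n ≠ 0) (t : ℝ) :
    Differentiable ℝ (f · t) := fun s =>
  (hf.differentiable hn (s, t)).hasFDerivAt.hasDerivAt_uncurry_left.differentiableAt

theorem ContDiff.differentiable_right (hf : ContDiff ℝ n (uncurry f)) (hn : n ≠ 0) (s : ℝ) :
    Differentiable ℝ (f s ·) := fun t =>
  (hf.differentiable hn (s, t)).hasFDerivAt.hasDerivAt_uncurry_right.differentiableAt

theorem ContDiff.uncurry_deriv_left {m : WithTop ℕ∞} (hf : ContDiff ℝ n (uncurry f))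
    (hmn : m + 1 ≤ n) : ContDiff ℝ m (uncurry fun s t => deriv (f · t) s) := by
  have hd : Differentiable ℝ (uncurry f) := hf.differentiable (by rintro rfl; simp at hmn)
  have hpartial : (uncurry fun s t => deriv (f · t) s) = fun p => fderiv ℝ (uncurry f) p (1, 0) :=
    funext fun p => (hd p).hasFDerivAt.hasDerivAt_uncurry_left.deriv
  rw [hpartial]
  exact (hf.fderiv_right hmn).clm_apply contDiff_const

theorem ContDiff.deriv_deriv_comm (hf : ContDiff ℝ n (uncurry f)) (hn : 2 ≤ n) (s t : ℝ) :
    deriv (fun τ => deriv (f · τ) s) t = deriv (fun σ => deriv (f σ ·) t) s := by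
  set D := fderiv ℝ (uncurry f)
  have hd : Differentiable ℝ (uncurry f) := hf.differentiable (by rintro rfl; simp at hn)
  have hD : Differentiable ℝ D := (hf.fderiv_right (m := 1) hn).differentiable one_ne_zero
  have h_left : (fun τ => deriv (f · τ) s) = fun τ => D (s, τ) (1, 0) :=
    funext fun τ => (hd (s, τ)).hasFDerivAt.hasDerivAt_uncurry_left.deriv
  have h_right : (fun σ => deriv (f σ ·) t) = fun σ => D (σ, t) (0, 1) :=
    funext fun σ => (hd (σ, t)).hasFDerivAt.hasDerivAt_uncurry_right.deriv
  rw [h_left, h_right,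
    ((hD (s, t)).hasFDerivAt.hasDerivAt_uncurry_right (f := fun σ τ => D (σ, τ))).clm_apply
      (hasDerivAt_const t _) |>.deriv,
    ((hD (s, t)).hasFDerivAt.hasDerivAt_uncurry_left (f := fun σ τ => D (σ, τ))).clm_apply
      (hasDerivAt_const s _) |>.deriv]
  simpa using (hf.contDiffAt.isSymmSndFDerivAt (by simpa using hn)).eq (0, 1) (1, 0)

end PartialDeriv

section Frenet

structure PartiallyNullFrenetAt {E : Type*} [NormedAddCommGroup E] [NormedSpace ℝ E]
    (T N B₁ B₂ : ℝ → E) (k₁ k₂ s : ℝ) : Prop where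
  hasDerivAt_T : HasDerivAt T (k₁ • N s) s
  hasDerivAt_N : HasDerivAt N (-k₁ • T s + k₂ • B₁ s) s
  hasDerivAt_B₁ : HasDerivAt B₁ 0 s
  hasDerivAt_B₂ : HasDerivAt B₂ (-k₂ • N s) s

variable {E : Type*} [NormedAddCommGroup E] [NormedSpace ℝ E] {k₁ k₂ s : ℝ}

theorem PartiallyNullFrenetAt.hasDerivAt_flow {T N B₁ B₂ : ℝ → E}
    (hF : PartiallyNullFrenetAt T N B₁ B₂ k₁ k₂ s) {β₁ β₂ β₃ β₄ : ℝ → ℝ} {β₂' β₃' β₄' : ℝ}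
    (h₁ : HasDerivAt β₁ (β₂ s * k₁) s) (h₂ : HasDerivAt β₂ β₂' s) (h₃ : HasDerivAt β₃ β₃' s)
    (h₄ : HasDerivAt β₄ β₄' s) :
    HasDerivAt (fun σ => β₁ σ • T σ + β₂ σ • N σ + β₃ σ • B₁ σ + β₄ σ • B₂ σ)
      ((β₁ s * k₁ + β₂' - β₄ s * k₂) • N s + (β₂ s * k₂ + β₃') • B₁ s + β₄' • B₂ s) s := by
  convert (((h₁.fun_smul hF.hasDerivAt_T).fun_add (h₂.fun_smul hF.hasDerivAt_N)).fun_add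
    (h₃.fun_smul hF.hasDerivAt_B₁)).fun_add (h₄.fun_smul hF.hasDerivAt_B₂) using 1
  module

theorem PartiallyNullFrenetAt.mink_deriv_normal {T N B₁ B₂ : ℝ → Fin 4 → ℝ}
    (hF : PartiallyNullFrenetAt T N B₁ B₂ k₁ k₂ s) (hNN : mink (N s) (N s) = 1)
    (hTN : mink (T s) (N s) = 0) (hNB₁ : mink (N s) (B₁ s) = 0) (hNB₂ : mink (N s) (B₂ s) = 0)
    {a b c : ℝ → ℝ} {a' : ℝ} (ha : HasDerivAt a a' s) (hb : DifferentiableAt ℝ b s)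
    (hc : DifferentiableAt ℝ c s) :
    mink (deriv (fun σ => a σ • N σ + b σ • B₁ σ + c σ • B₂ σ) s) (N s) = a' - c s * k₂ := by
  rw [(((ha.fun_smul hF.hasDerivAt_N).fun_add (hb.hasDerivAt.fun_smul hF.hasDerivAt_B₁)).fun_add
    (hc.hasDerivAt.fun_smul hF.hasDerivAt_B₂)).deriv]
  simp only [mink_add_left, mink_smul_left, mink_zero_left, hNN, hTN, mink_comm (B₁ s), hNB₁,
    mink_comm (B₂ s), hNB₂, smul_zero]
  ring

theorem deriv_time_tangent_eq {γ T : ℝ → ℝ → E} {N B₁ B₂ : ℝ → E} {β₁ β₂ β₃ β₄ : ℝ → ℝ}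
    {n : WithTop ℕ∞} {t : ℝ} (hγ : ContDiff ℝ n (uncurry γ)) (hn : 2 ≤ n)
    (hT : ∀ τ, T s τ = deriv (γ · τ) s) (hF : PartiallyNullFrenetAt (T · t) N B₁ B₂ k₁ k₂ s)
    (hflow : ∀ σ, deriv (γ σ ·) t = β₁ σ • T σ t + β₂ σ • N σ + β₃ σ • B₁ σ + β₄ σ • B₂ σ)
    (hβ₁ : HasDerivAt β₁ (β₂ s * k₁) s) (hβ₂ : DifferentiableAt ℝ β₂ s)
    (hβ₃ : DifferentiableAt ℝ β₃ s) (hβ₄ : DifferentiableAt ℝ β₄ s) :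
    deriv (T s ·) t = (β₁ s * k₁ + deriv β₂ s - β₄ s * k₂) • N s
      + (β₂ s * k₂ + deriv β₃ s) • B₁ s + deriv β₄ s • B₂ s := by
  rw [show (T s ·) = fun τ => deriv (γ · τ) s from funext hT, hγ.deriv_deriv_comm hn,
    show (fun σ => deriv (γ σ ·) t) = _ from funext hflow]
  exact (hF.hasDerivAt_flow hβ₁ hβ₂.hasDerivAt hβ₃.hasDerivAt hβ₄.hasDerivAt).deriv

theorem deriv_time_curvature_eq {T N : ℝ → ℝ → Fin 4 → ℝ} {k₁ : ℝ → ℝ} {n : WithTop ℕ∞}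
    {s t : ℝ} (hT : ContDiff ℝ n (uncurry T)) (hn : 2 ≤ n) (hN : DifferentiableAt ℝ (N s ·) t)
    (hNN : ∀ τ, mink (N s τ) (N s τ) = 1) (hk₁ : ∀ τ, deriv (T · τ) s = k₁ τ • N s τ) :
    deriv k₁ t = mink (deriv (fun σ => deriv (T σ ·) t) s) (N s t) := by
  have hk₁_eq : k₁ = fun τ => mink (deriv (T · τ) s) (N s τ) :=
    funext fun τ => by rw [hk₁, mink_smul_left, hNN, mul_one]
  have hT' : DifferentiableAt ℝ (fun τ => deriv (T · τ) s) t :=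
    (hT.uncurry_deriv_left (m := 1) (by rwa [one_add_one_eq_two])).differentiable_right
      one_ne_zero s t
  rw [hk₁_eq, (hT'.hasDerivAt.mink hN.hasDerivAt).deriv, hk₁, mink_smul_left,
    mink_eq_zero_of_mink_self_eq_const hN.hasDerivAt hNN, mul_zero, add_zero,
    hT.deriv_deriv_comm hn]

end Frenet

theorem curvature_evolution_k1_partially_null_general
    (γ T N B₁ B₂ : ℝ → ℝ → (Fin 4 → ℝ))
    (k₁ k₂ β₁ β₂ β₃ β₄ : ℝ → ℝ → ℝ)
    (hγsmooth : ContDiff ℝ (⊤ : ℕ∞) (fun p : ℝ × ℝ => γ p.1 p.2))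
    (hTsmooth : ContDiff ℝ (⊤ : ℕ∞) (fun p : ℝ × ℝ => T p.1 p.2))
    (hNsmooth : ContDiff ℝ (⊤ : ℕ∞) (fun p : ℝ × ℝ => N p.1 p.2))
    (hB₁smooth : ContDiff ℝ (⊤ : ℕ∞) (fun p : ℝ × ℝ => B₁ p.1 p.2))
    (hB₂smooth : ContDiff ℝ (⊤ : ℕ∞) (fun p : ℝ × ℝ => B₂ p.1 p.2))
    (hk₁smooth : ContDiff ℝ (⊤ : ℕ∞) (fun p : ℝ × ℝ => k₁ p.1 p.2))
    (hk₂smooth : ContDiff ℝ (⊤ : ℕ∞) (fun p : ℝ × ℝ => k₂ p.1 p.2))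
    (hβ₁smooth : ContDiff ℝ (⊤ : ℕ∞) (fun p : ℝ × ℝ => β₁ p.1 p.2))
    (hβ₂smooth : ContDiff ℝ (⊤ : ℕ∞) (fun p : ℝ × ℝ => β₂ p.1 p.2))
    (hβ₃smooth : ContDiff ℝ (⊤ : ℕ∞) (fun p : ℝ × ℝ => β₃ p.1 p.2))
    (hβ₄smooth : ContDiff ℝ (⊤ : ℕ∞) (fun p : ℝ × ℝ => β₄ p.1 p.2))
    (hNN : ∀ s t : ℝ, mink (N s t) (N s t) = 1)
    (hTN : ∀ s t : ℝ, mink (T s t) (N s t) = 0)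
    (hNB₁ : ∀ s t : ℝ, mink (N s t) (B₁ s t) = 0)
    (hNB₂ : ∀ s t : ℝ, mink (N s t) (B₂ s t) = 0)
    -- arclength parametrization and Frenet equations (k₃ = 0)
    (hT : ∀ s t : ℝ, T s t = deriv (fun x => γ x t) s)
    (hfr₁ : ∀ s t : ℝ, deriv (fun x => T x t) s = k₁ s t • N s t)
    (hfr₂ : ∀ s t : ℝ, deriv (fun x => N x t) s = -(k₁ s t) • T s t + k₂ s t • B₁ s t)
    (hfr₃ : ∀ s t : ℝ, deriv (fun x => B₁ x t) s = 0)
    (hfr₄ : ∀ s t : ℝ, deriv (fun x => B₂ x t) s = -(k₂ s t) • N s t)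
    (hflow : ∀ s t : ℝ, deriv (fun x => γ s x) t =
      β₁ s t • T s t + β₂ s t • N s t + β₃ s t • B₁ s t + β₄ s t • B₂ s t)
    -- inextensibility: ∂β₁/∂s = β₂k₁
    (hinext : ∀ s t : ℝ, deriv (fun x => β₁ x t) s = β₂ s t * k₁ s t) :
    ∀ s t : ℝ, deriv (fun x => k₁ s x) t =
      deriv (fun x => deriv (fun y => β₂ y t) x) s + deriv (fun x => β₁ x t * k₁ x t) s -
      deriv (fun x => β₄ x t * k₂ x t) s - deriv (fun x => β₄ x t) s * k₂ s t := by
  intro s t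
  have hn : ((⊤ : ℕ∞) : WithTop ℕ∞) ≠ 0 := by simp
  have hn₁ : ((⊤ : ℕ∞) : WithTop ℕ∞) + 1 ≤ (⊤ : ℕ∞) := by simp
  have hn₂ : (2 : WithTop ℕ∞) ≤ (⊤ : ℕ∞) := WithTop.coe_le_coe.2 le_top
  have frenet (σ : ℝ) : PartiallyNullFrenetAt (T · t) (N · t) (B₁ · t) (B₂ · t)
      (k₁ σ t) (k₂ σ t) σ :=
    ⟨(hTsmooth.differentiable_left hn t σ).hasDerivAt.congr_deriv (hfr₁ σ t),
      (hNsmooth.differentiable_left hn t σ).hasDerivAt.congr_deriv (hfr₂ σ t),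
      (hB₁smooth.differentiable_left hn t σ).hasDerivAt.congr_deriv (hfr₃ σ t),
      (hB₂smooth.differentiable_left hn t σ).hasDerivAt.congr_deriv (hfr₄ σ t)⟩
  have hTt (σ : ℝ) := deriv_time_tangent_eq hγsmooth hn₂ (hT σ) (frenet σ) (hflow · t)
    ((hβ₁smooth.differentiable_left hn t σ).hasDerivAt.congr_deriv (hinext σ t))
    (hβ₂smooth.differentiable_left hn t σ) (hβ₃smooth.differentiable_left hn t σ)
    (hβ₄smooth.differentiable_left hn t σ)
  have ha : HasDerivAt (fun σ => β₁ σ t * k₁ σ t + deriv (β₂ · t) σ - β₄ σ t * k₂ σ t)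
      (deriv (fun x => β₁ x t * k₁ x t) s + deriv (fun x => deriv (β₂ · t) x) s
        - deriv (fun x => β₄ x t * k₂ x t) s) s :=
    (((hβ₁smooth.differentiable_left hn t s).fun_mul
        (hk₁smooth.differentiable_left hn t s)).hasDerivAt.fun_add
      ((hβ₂smooth.uncurry_deriv_left hn₁).differentiable_left hn t s).hasDerivAt).fun_sub
      ((hβ₄smooth.differentiable_left hn t s).fun_mul
        (hk₂smooth.differentiable_left hn t s)).hasDerivAt
  rw [deriv_time_curvature_eq hTsmooth hn₂ (hNsmooth.differentiable_right hn s t) (hNN s)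
      (hfr₁ s), funext hTt,
    (frenet s).mink_deriv_normal (hNN s t) (hTN s t) (hNB₁ s t) (hNB₂ s t) ha
      (((hβ₂smooth.differentiable_left hn t s).fun_mul
        (hk₂smooth.differentiable_left hn t s)).fun_add
        ((hβ₃smooth.uncurry_deriv_left hn₁).differentiable_left hn t s))
      ((hβ₄smooth.uncurry_deriv_left hn₁).differentiable_left hn t s)]
  ring

theorem curvature_evolution_k1_partially_null
    (γ T N B₁ B₂ : ℝ → ℝ → (Fin 4 → ℝ))
    (k₁ k₂ β₁ β₂ β₃ β₄ : ℝ → ℝ → ℝ)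
    (hγsmooth : ContDiff ℝ (⊤ : ℕ∞) (fun p : ℝ × ℝ => γ p.1 p.2))
    (hTsmooth : ContDiff ℝ (⊤ : ℕ∞) (fun p : ℝ × ℝ => T p.1 p.2))
    (hNsmooth : ContDiff ℝ (⊤ : ℕ∞) (fun p : ℝ × ℝ => N p.1 p.2))
    (hB₁smooth : ContDiff ℝ (⊤ : ℕ∞) (fun p : ℝ × ℝ => B₁ p.1 p.2))
    (hB₂smooth : ContDiff ℝ (⊤ : ℕ∞) (fun p : ℝ × ℝ => B₂ p.1 p.2))
    (hk₁smooth : ContDiff ℝ (⊤ : ℕ∞) (fun p : ℝ × ℝ => k₁ p.1 p.2))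
    (hk₂smooth : ContDiff ℝ (⊤ : ℕ∞) (fun p : ℝ × ℝ => k₂ p.1 p.2))
    (hβ₁smooth : ContDiff ℝ (⊤ : ℕ∞) (fun p : ℝ × ℝ => β₁ p.1 p.2))
    (hβ₂smooth : ContDiff ℝ (⊤ : ℕ∞) (fun p : ℝ × ℝ => β₂ p.1 p.2))
    (hβ₃smooth : ContDiff ℝ (⊤ : ℕ∞) (fun p : ℝ × ℝ => β₃ p.1 p.2))
    (hβ₄smooth : ContDiff ℝ (⊤ : ℕ∞) (fun p : ℝ × ℝ => β₄ p.1 p.2))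
    (hTT : ∀ s t : ℝ, mink (T s t) (T s t) = 1)
    (hNN : ∀ s t : ℝ, mink (N s t) (N s t) = 1)
    (hB₁B₁ : ∀ s t : ℝ, mink (B₁ s t) (B₁ s t) = 0)
    (hB₂B₂ : ∀ s t : ℝ, mink (B₂ s t) (B₂ s t) = 0)
    (hB₁B₂ : ∀ s t : ℝ, mink (B₁ s t) (B₂ s t) = 1)
    (hTN : ∀ s t : ℝ, mink (T s t) (N s t) = 0)
    (hTB₁ : ∀ s t : ℝ, mink (T s t) (B₁ s t) = 0)
    (hTB₂ : ∀ s t : ℝ, mink (T s t) (B₂ s t) = 0)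
    (hNB₁ : ∀ s t : ℝ, mink (N s t) (B₁ s t) = 0)
    (hNB₂ : ∀ s t : ℝ, mink (N s t) (B₂ s t) = 0)
    -- arclength parametrization and Frenet equations (k₃ = 0)
    (hT : ∀ s t : ℝ, T s t = deriv (fun x => γ x t) s)
    (hunit : ∀ s t : ℝ, mnorm (deriv (fun x => γ x t) s) = 1)
    (hfr₁ : ∀ s t : ℝ, deriv (fun x => T x t) s = k₁ s t • N s t)
    (hfr₂ : ∀ s t : ℝ, deriv (fun x => N x t) s = -(k₁ s t) • T s t + k₂ s t • B₁ s t)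
    (hfr₃ : ∀ s t : ℝ, deriv (fun x => B₁ x t) s = 0)
    (hfr₄ : ∀ s t : ℝ, deriv (fun x => B₂ x t) s = -(k₂ s t) • N s t)
    (hflow : ∀ s t : ℝ, deriv (fun x => γ s x) t =
      β₁ s t • T s t + β₂ s t • N s t + β₃ s t • B₁ s t + β₄ s t • B₂ s t)
    -- inextensibility: ∂β₁/∂s = β₂k₁
    (hinext : ∀ s t : ℝ, deriv (fun x => β₁ x t) s = β₂ s t * k₁ s t) :
    ∀ s t : ℝ, deriv (fun x => k₁ s x) t =
      deriv (fun x => deriv (fun y => β₂ y t) x) s + deriv (fun x => β₁ x t * k₁ x t) s -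
      deriv (fun x => β₄ x t * k₂ x t) s - deriv (fun x => β₄ x t) s * k₂ s t :=
  curvature_evolution_k1_partially_null_general γ T N B₁ B₂ k₁ k₂ β₁ β₂ β₃ β₄ hγsmooth hTsmooth
    hNsmooth hB₁smooth hB₂smooth hk₁smooth hk₂smooth hβ₁smooth hβ₂smooth hβ₃smooth hβ₄smooth hNN hTN
    hNB₁ hNB₂ hT hfr₁ hfr₂ hfr₃ hfr₄ hflow hinext
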